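/- For all R1, R2 ∈ ℛ: J_{R1}(π) = J_{R2}(π) for every policy π if and only if there exists Φ : S → ℝ with ∑_{s∈S} ι(s)·Φ(s) = 0 such that for all (s,a) ∈ S×A, ∑_{s'∈S} τ(s,a)(s')·R2(s,a,s') = ∑_{s'∈S} τ(s,a)(s')·(R1(s,a,s') + γ·Φ(s')) − Φ(s). -/

import Mathlib

open scoped BigOperators

/-- A probability vector on a finite type. -/
def IsProbVec {X : Type} [Fintype X] (p : X → ℝ) : Prop :=
  (∀ x, 0 ≤ p x) ∧ ∑ x, p x = 1

/-- A (stationary) policy: a probability vector over actions for each state. -/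
def Policy (S A : Type) [Fintype A] : Type :=
  {p : S → A → ℝ // ∀ s, IsProbVec (p s)}

/-- The transition matrix `P_π` induced by a policy `π` under transition function `τ`. -/
noncomputable def Pmat {S A : Type} [Fintype S] [Fintype A]
    (τ : S → A → S → ℝ) (π : Policy S A) : Matrix S S ℝ :=
  Matrix.of fun s s' => ∑ a, π.1 s a * τ s a s'

/-- The state distribution `ι P_π^t` at time `t`. -/
noncomputable def stateDist {S A : Type} [Fintype S] [DecidableEq S] [Fintype A]
    (τ : S → A → S → ℝ) (ι : S → ℝ) (π : Policy S A) (t : ℕ) : S → ℝ :=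
  Matrix.vecMul ι (Pmat τ π ^ t)

/-- The expected one-step reward `r_{R,π}`. -/
noncomputable def rvec {S A : Type} [Fintype S] [Fintype A]
    (τ : S → A → S → ℝ) (R : S → A → S → ℝ) (π : Policy S A) (s : S) : ℝ :=
  ∑ a, π.1 s a * ∑ s', τ s a s' * R s a s'

/-- The policy evaluation function `J_R(π)`. -/
noncomputable def Jval {S A : Type} [Fintype S] [DecidableEq S] [Fintype A]
    (τ : S → A → S → ℝ) (ι : S → ℝ) (γ : ℝ) (R : S → A → S → ℝ)
    (π : Policy S A) : ℝ :=
  ∑' t : ℕ, γ ^ t * ∑ s, stateDist τ ι π t s * rvec τ R π s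

/-- Every state is reachable under `τ` and `ι`. -/
def AllReachable {S A : Type} [Fintype S] [DecidableEq S] [Fintype A]
    (τ : S → A → S → ℝ) (ι : S → ℝ) : Prop :=
  ∀ s : S, ∃ (π : Policy S A) (t : ℕ), 0 < stateDist τ ι π t s

/-- `π` is an optimal policy for `R`. -/
def IsOptimal {S A : Type} [Fintype S] [DecidableEq S] [Fintype A]
    (τ : S → A → S → ℝ) (ι : S → ℝ) (γ : ℝ) (R : S → A → S → ℝ)
    (π : Policy S A) : Prop :=
  ∀ π' : Policy S A, Jval τ ι γ R π' ≤ Jval τ ι γ R π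

/-- `R₁ ≡_OPT R₂`: the same policies are optimal for `R₁` and `R₂`. -/
def EquivOPT {S A : Type} [Fintype S] [DecidableEq S] [Fintype A]
    (τ : S → A → S → ℝ) (ι : S → ℝ) (γ : ℝ) (R₁ R₂ : S → A → S → ℝ) : Prop :=
  ∀ π : Policy S A, IsOptimal τ ι γ R₁ π ↔ IsOptimal τ ι γ R₂ π

/-- `R₁ ≡_ORD R₂`: `R₁` and `R₂` induce the same ordering of policies. -/
def EquivORD {S A : Type} [Fintype S] [DecidableEq S] [Fintype A]
    (τ : S → A → S → ℝ) (ι : S → ℝ) (γ : ℝ) (R₁ R₂ : S → A → S → ℝ) : Prop :=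
  ∀ π π' : Policy S A,
    (Jval τ ι γ R₁ π' < Jval τ ι γ R₁ π ↔ Jval τ ι γ R₂ π' < Jval τ ι γ R₂ π)

/-- `f` is `P`-admissible: `f R₁ = f R₂` implies `P R₁ R₂`. -/
def PAdmissible {R : Type*} {X : Type*} (P : R → R → Prop) (f : R → X) : Prop :=
  ∀ R₁ R₂ : R, f R₁ = f R₂ → P R₁ R₂

/-- `f` is `P`-robust to misspecification with `g`. -/
def PRobust {R : Type*} {X : Type*} (P : R → R → Prop) (f g : R → X) : Prop :=
  PAdmissible P f ∧ f ≠ g ∧ Set.range g ⊆ Set.range f ∧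
    ∀ R₁ R₂ : R, f R₁ = g R₂ → P R₁ R₂


/-! The value `J_R(π)` is the pairing of the discounted occupancy `d_π = ∑ₜ γᵗ ι P_πᵗ` with the
expected reward, and `d_π` satisfies the flow equation `d_π = ι + γ d_π P_π`. Hence adding the
shaping term `γ Φ(s') - Φ(s)` changes every `J(π)` by `-⟨ι, Φ⟩`, which gives one direction.

Conversely, let `f` be the difference of expected rewards, so that `f` has value zero under every
policy. Fix a policy `π₀` reaching every state. Since `1 - γ P_{π₀}` is strictly diagonally
dominant, there is `Φ` with `E_{π₀}[f - shaping Φ] = 0`. The residual `Q := f - shaping Φ` then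
has value `⟨ι, Φ⟩` under every policy; at `π₀` this value is `0`. Under the policy that mixes
`π₀` with "play `a` at `s`", the value of `Q` is `d(s) Q(s,a) / 2` with `d(s) > 0`, so `Q = 0`. -/

open Matrix Finset

namespace Policy

variable {S A : Type} [Fintype A]

def expect (π : Policy S A) (f : S → A → ℝ) (s : S) : ℝ :=
  ∑ a, π.1 s a * f s a

lemma expect_sub (π : Policy S A) (f g : S → A → ℝ) :
    π.expect (f - g) = π.expect f - π.expect g := by
  funext s; simp [expect, mul_sub, sum_sub_distrib]

noncomputable def mixture {I : Type} [Fintype I] [Nonempty I] (f : I → Policy S A) :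
    Policy S A :=
  ⟨fun x b => (Fintype.card I : ℝ)⁻¹ * ∑ i, (f i).1 x b, fun x =>
    ⟨fun b => mul_nonneg (by positivity) (sum_nonneg fun i _ => ((f i).2 x).1 b), by
      rw [← mul_sum, sum_comm]
      simp [((f _).2 x).2]⟩⟩

lemma le_mixture {I : Type} [Fintype I] [Nonempty I] (f : I → Policy S A) (i : I) (x : S)
    (b : A) : (Fintype.card I : ℝ)⁻¹ * (f i).1 x b ≤ (mixture f).1 x b :=
  mul_le_mul_of_nonneg_left (single_le_sum (fun j _ => ((f j).2 x).1 b) (mem_univ i))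
    (by positivity)

lemma expect_mixture {I : Type} [Fintype I] [Nonempty I] (f : I → Policy S A)
    (g : S → A → ℝ) (x : S) :
    (mixture f).expect g x = (Fintype.card I : ℝ)⁻¹ * ∑ i, (f i).expect g x := by
  simp only [expect, mixture, mul_sum, sum_mul, mul_assoc]
  exact sum_comm

def update [DecidableEq S] [DecidableEq A] (π : Policy S A) (s : S) (a : A) : Policy S A :=
  ⟨fun x => if x = s then Pi.single a 1 else π.1 x, fun x => by
    dsimp only
    split_ifs
    · exact ⟨fun b => by by_cases hb : b = a <;> simp [hb], by simp⟩
    · exact π.2 x⟩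

lemma expect_update [DecidableEq S] [DecidableEq A] (π : Policy S A) (s : S) (a : A)
    (g : S → A → ℝ) (x : S) :
    (π.update s a).expect g x = if x = s then g s a else π.expect g x := by
  by_cases hx : x = s
  · subst hx; simp [expect, update, Pi.single_apply]
  · simp [expect, update, hx]

end Policy

variable {S A : Type} [Fintype S] [Fintype A] {τ : S → A → S → ℝ} {ι : S → ℝ} {γ : ℝ}

def expectedReward (τ : S → A → S → ℝ) (R : S → A → S → ℝ) (s : S) (a : A) : ℝ :=
  ∑ s', τ s a s' * R s a s'

def potentialShaping (τ : S → A → S → ℝ) (γ : ℝ) (Φ : S → ℝ) (s : S) (a : A) : ℝ :=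
  γ * ∑ s', τ s a s' * Φ s' - Φ s

lemma expect_potentialShaping (π : Policy S A) (Φ : S → ℝ) :
    π.expect (potentialShaping τ γ Φ) = γ • (Pmat τ π *ᵥ Φ) - Φ := by
  funext s
  have hΦ : ∑ a, π.1 s a * Φ s = Φ s := by rw [← sum_mul, (π.2 s).2, one_mul]
  simp only [Policy.expect, potentialShaping, mul_sub, sum_sub_distrib, hΦ, Pi.sub_apply,
    Pi.smul_apply, smul_eq_mul, mulVec, dotProduct, Pmat, of_apply, mul_sum, sum_mul]
  rw [sum_comm]
  exact congrArg (· - Φ s) (sum_congr rfl fun _ _ => sum_congr rfl fun _ _ => by ring)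

variable [DecidableEq S]

lemma pow_mul_pow_apply_le {M N : Matrix S S ℝ} {c : ℝ} (hc : 0 ≤ c) (hN : N ∈ rowStochastic ℝ S)
    (h : ∀ x y, c * N x y ≤ M x y) (t : ℕ) (x y : S) : c ^ t * (N ^ t) x y ≤ (M ^ t) x y := by
  induction t generalizing y with
  | zero => simp
  | succ n ih =>
    simp only [pow_succ, mul_apply, mul_sum]
    refine sum_le_sum fun z _ => ?_
    have hNn : 0 ≤ (N ^ n) x z := nonneg_of_mem_rowStochastic (pow_mem hN n)
    calc c ^ n * c * ((N ^ n) x z * N z y) = (c ^ n * (N ^ n) x z) * (c * N z y) := by ring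
      _ ≤ (M ^ n) x z * M z y :=
          mul_le_mul (ih z) (h z y) (mul_nonneg hc (nonneg_of_mem_rowStochastic hN))
            ((mul_nonneg (pow_nonneg hc n) hNn).trans (ih z))

lemma det_one_sub_smul_ne_zero {P : Matrix S S ℝ} (hP : P ∈ rowStochastic ℝ S) (hγ0 : 0 ≤ γ)
    (hγ1 : γ < 1) : (1 - γ • P).det ≠ 0 := by
  refine det_ne_zero_of_sum_row_lt_diag fun k => ?_
  have hoff : ∑ j ∈ univ.erase k, ‖(1 - γ • P) k j‖ = γ * (1 - P k k) := by
    rw [← sum_row_of_mem_rowStochastic hP k, ← add_sum_erase _ _ (mem_univ k), add_sub_cancel_left,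
      mul_sum]
    refine sum_congr rfl fun j hj => ?_
    simp [one_apply_ne' (ne_of_mem_erase hj), abs_of_nonneg hγ0,
      abs_of_nonneg (nonneg_of_mem_rowStochastic hP)]
  have hdiag : ‖(1 - γ • P) k k‖ = 1 - γ * P k k := by
    have : γ * P k k ≤ 1 := by nlinarith [le_one_of_mem_rowStochastic hP (i := k) (j := k),
      nonneg_of_mem_rowStochastic hP (i := k) (j := k)]
    simp [abs_of_nonneg (sub_nonneg.2 this)]
  rw [hoff, hdiag]
  nlinarith [le_one_of_mem_rowStochastic hP (i := k) (j := k)]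

lemma Pmat_mem_rowStochastic (hτ : ∀ s a, IsProbVec (τ s a)) (π : Policy S A) :
    Pmat τ π ∈ rowStochastic ℝ S := by
  refine mem_rowStochastic_iff_sum.2 ⟨fun s s' => ?_, fun s => ?_⟩
  · exact sum_nonneg fun a _ => mul_nonneg ((π.2 s).1 a) ((hτ s a).1 s')
  · simp only [Pmat, of_apply]
    rw [sum_comm]
    simp only [← mul_sum, (hτ s _).2, mul_one, (π.2 s).2]

lemma stateDist_nonneg (hτ : ∀ s a, IsProbVec (τ s a)) (hι : IsProbVec ι)
    (π : Policy S A) (t : ℕ) (s : S) : 0 ≤ stateDist τ ι π t s :=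
  nonneg_vecMul_of_mem_rowStochastic (pow_mem (Pmat_mem_rowStochastic hτ π) t) hι.1 s

lemma stateDist_le_one (hτ : ∀ s a, IsProbVec (τ s a)) (hι : IsProbVec ι)
    (π : Policy S A) (t : ℕ) (s : S) : stateDist τ ι π t s ≤ 1 := by
  have hsum : ∑ x, stateDist τ ι π t x = 1 := by
    simpa [dotProduct, stateDist] using vecMul_dotProduct_one_eq_one_rowStochastic
      (pow_mem (Pmat_mem_rowStochastic hτ π) t) (by simpa [dotProduct] using hι.2)
  exact hsum ▸ single_le_sum (fun x _ => stateDist_nonneg hτ hι π t x) (mem_univ s)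

lemma stateDist_succ (π : Policy S A) (t : ℕ) :
    stateDist τ ι π (t + 1) = stateDist τ ι π t ᵥ* Pmat τ π := by
  simp only [stateDist, pow_succ, vecMul_vecMul]

lemma stateDist_pos_of_le (hτ : ∀ s a, IsProbVec (τ s a)) (hι : IsProbVec ι)
    {π π' : Policy S A} {c : ℝ} (hc : 0 < c) (h : ∀ x b, c * π.1 x b ≤ π'.1 x b)
    {t : ℕ} {s : S} (hs : 0 < stateDist τ ι π t s) : 0 < stateDist τ ι π' t s := by
  have hP : ∀ x y, c * Pmat τ π x y ≤ Pmat τ π' x y := fun x y => by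
    simp only [Pmat, of_apply, mul_sum, ← mul_assoc]
    exact sum_le_sum fun a _ => mul_le_mul_of_nonneg_right (h x a) ((hτ x a).1 y)
  have hPt := pow_mul_pow_apply_le hc.le (Pmat_mem_rowStochastic hτ π) hP t
  refine (mul_pos (pow_pos hc t) hs).trans_le ?_
  simp only [stateDist, vecMul, dotProduct, mul_sum]
  exact sum_le_sum fun x _ => by
    rw [mul_left_comm]; exact mul_le_mul_of_nonneg_left (hPt x s) (hι.1 x)

lemma exists_policy_forall_reaches [Nonempty S] (hτ : ∀ s a, IsProbVec (τ s a))
    (hι : IsProbVec ι) (hreach : AllReachable τ ι) :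
    ∃ π : Policy S A, ∀ s, ∃ t, 0 < stateDist τ ι π t s := by
  choose f t hf using hreach
  exact ⟨Policy.mixture f, fun s =>
    ⟨t s, stateDist_pos_of_le hτ hι (by positivity) (Policy.le_mixture f s) (hf s)⟩⟩

noncomputable def occupancy (τ : S → A → S → ℝ) (ι : S → ℝ) (γ : ℝ) (π : Policy S A) (s : S) :
    ℝ :=
  ∑' t : ℕ, γ ^ t * stateDist τ ι π t s

lemma summable_occupancy (hτ : ∀ s a, IsProbVec (τ s a)) (hι : IsProbVec ι) (hγ0 : 0 ≤ γ)
    (hγ1 : γ < 1) (π : Policy S A) (s : S) :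
    Summable fun t : ℕ => γ ^ t * stateDist τ ι π t s :=
  (summable_geometric_of_lt_one hγ0 hγ1).of_nonneg_of_le
    (fun t => mul_nonneg (pow_nonneg hγ0 t) (stateDist_nonneg hτ hι π t s))
    (fun t => mul_le_of_le_one_right (pow_nonneg hγ0 t) (stateDist_le_one hτ hι π t s))

lemma occupancy_eq_add (hτ : ∀ s a, IsProbVec (τ s a)) (hι : IsProbVec ι) (hγ0 : 0 ≤ γ)
    (hγ1 : γ < 1) (π : Policy S A) :
    occupancy τ ι γ π = ι + γ • (occupancy τ ι γ π ᵥ* Pmat τ π) := by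
  funext s
  have hshift : ∀ t, γ ^ (t + 1) * stateDist τ ι π (t + 1) s =
      γ * ∑ x, γ ^ t * stateDist τ ι π t x * Pmat τ π x s := fun t => by
    simp only [stateDist_succ, vecMul, dotProduct, mul_sum, pow_succ]
    exact sum_congr rfl fun x _ => by ring
  rw [occupancy, (summable_occupancy hτ hι hγ0 hγ1 π s).tsum_eq_zero_add, tsum_congr hshift,
    tsum_mul_left, Summable.tsum_finsetSum fun x _ =>
      (summable_occupancy hτ hι hγ0 hγ1 π x).mul_right _]
  simp [stateDist, occupancy, tsum_mul_right, vecMul, dotProduct, one_apply]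

lemma occupancy_pos (hτ : ∀ s a, IsProbVec (τ s a)) (hι : IsProbVec ι) (hγ0 : 0 < γ)
    (hγ1 : γ < 1) {π : Policy S A} {s : S} {t : ℕ} (ht : 0 < stateDist τ ι π t s) :
    0 < occupancy τ ι γ π s :=
  (mul_pos (pow_pos hγ0 t) ht).trans_le <|
    (summable_occupancy hτ hι hγ0.le hγ1 π s).le_tsum t fun u _ =>
      mul_nonneg (pow_nonneg hγ0.le u) (stateDist_nonneg hτ hι π u s)

noncomputable def policyValue (τ : S → A → S → ℝ) (ι : S → ℝ) (γ : ℝ) (π : Policy S A)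
    (f : S → A → ℝ) : ℝ :=
  occupancy τ ι γ π ⬝ᵥ π.expect f

lemma policyValue_sub (π : Policy S A) (f g : S → A → ℝ) :
    policyValue τ ι γ π (f - g) = policyValue τ ι γ π f - policyValue τ ι γ π g := by
  rw [policyValue, Policy.expect_sub, dotProduct_sub, policyValue, policyValue]

lemma Jval_eq_policyValue (hτ : ∀ s a, IsProbVec (τ s a)) (hι : IsProbVec ι) (hγ0 : 0 ≤ γ)
    (hγ1 : γ < 1) (R : S → A → S → ℝ) (π : Policy S A) :
    Jval τ ι γ R π = policyValue τ ι γ π (expectedReward τ R) := by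
  change _ = occupancy τ ι γ π ⬝ᵥ rvec τ R π
  simp only [Jval, occupancy, dotProduct, ← tsum_mul_right, mul_sum, mul_assoc]
  exact (Summable.tsum_finsetSum fun s _ =>
    ((summable_occupancy hτ hι hγ0 hγ1 π s).mul_right (rvec τ R π s)).congr
      fun t => mul_assoc _ _ _)

lemma policyValue_potentialShaping (hτ : ∀ s a, IsProbVec (τ s a)) (hι : IsProbVec ι)
    (hγ0 : 0 ≤ γ) (hγ1 : γ < 1) (π : Policy S A) (Φ : S → ℝ) :
    policyValue τ ι γ π (potentialShaping τ γ Φ) = -(ι ⬝ᵥ Φ) := by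
  have hflow := congrArg (· ⬝ᵥ Φ) (occupancy_eq_add hτ hι hγ0 hγ1 π)
  simp only [add_dotProduct, smul_dotProduct, smul_eq_mul] at hflow
  rw [policyValue, expect_potentialShaping, dotProduct_sub, dotProduct_smul, dotProduct_mulVec,
    smul_eq_mul]
  linarith

lemma exists_expect_potentialShaping_eq (hτ : ∀ s a, IsProbVec (τ s a)) (hγ0 : 0 ≤ γ)
    (hγ1 : γ < 1) (π : Policy S A) (g : S → ℝ) :
    ∃ Φ, π.expect (potentialShaping τ γ Φ) = g := by
  set N := 1 - γ • Pmat τ π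
  have hN : IsUnit N.det :=
    (det_one_sub_smul_ne_zero (Pmat_mem_rowStochastic hτ π) hγ0 hγ1).isUnit
  refine ⟨-(N⁻¹ *ᵥ g), ?_⟩
  have hNΦ : ∀ Φ, γ • (Pmat τ π *ᵥ Φ) - Φ = -(N *ᵥ Φ) := fun Φ => by
    simp only [N, sub_mulVec, one_mulVec, smul_mulVec, neg_sub]
  rw [expect_potentialShaping, hNΦ, mulVec_neg, neg_neg, mulVec_mulVec, mul_nonsing_inv _ hN,
    one_mulVec]

lemma eq_zero_of_forall_policyValue_eq_zero (hτ : ∀ s a, IsProbVec (τ s a)) (hι : IsProbVec ι)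
    (hγ0 : 0 < γ) (hγ1 : γ < 1) {π₀ : Policy S A} (hπ₀ : ∀ s, ∃ t, 0 < stateDist τ ι π₀ t s)
    {Q : S → A → ℝ} (hQ₀ : π₀.expect Q = 0) (hQ : ∀ π, policyValue τ ι γ π Q = 0) : Q = 0 := by
  classical
  funext s a
  set π' := Policy.mixture ![π₀, π₀.update s a]
  have hexp : π'.expect Q = Pi.single s (Q s a / 2) := by
    funext x
    by_cases hx : x = s
    · subst hx; simp [π', Policy.expect_mixture, Policy.expect_update, hQ₀, div_eq_inv_mul]
    · simp [π', Policy.expect_mixture, Policy.expect_update, hQ₀, hx]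
  obtain ⟨t, ht⟩ := hπ₀ s
  have hocc : 0 < occupancy τ ι γ π' s := occupancy_pos hτ hι hγ0 hγ1 <|
    stateDist_pos_of_le hτ hι (by norm_num) (Policy.le_mixture _ 0) ht
  have h := hQ π'
  rw [policyValue, hexp, dotProduct_single] at h
  simpa [hocc.ne'] using h

theorem forall_policyValue_eq_zero_iff [Nonempty S] (hτ : ∀ s a, IsProbVec (τ s a))
    (hι : IsProbVec ι) (hγ0 : 0 < γ) (hγ1 : γ < 1) (hreach : AllReachable τ ι)
    {f : S → A → ℝ} :
    (∀ π, policyValue τ ι γ π f = 0) ↔ ∃ Φ, ι ⬝ᵥ Φ = 0 ∧ f = potentialShaping τ γ Φ := by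
  constructor
  · intro hf
    obtain ⟨π₀, hπ₀⟩ := exists_policy_forall_reaches hτ hι hreach
    obtain ⟨Φ, hΦ⟩ := exists_expect_potentialShaping_eq hτ hγ0.le hγ1 π₀ (π₀.expect f)
    have hvalue : ∀ π, policyValue τ ι γ π (f - potentialShaping τ γ Φ) = ι ⬝ᵥ Φ := fun π => by
      rw [policyValue_sub, hf, policyValue_potentialShaping hτ hι hγ0.le hγ1, zero_sub, neg_neg]
    have hexp₀ : π₀.expect (f - potentialShaping τ γ Φ) = 0 := by
      rw [Policy.expect_sub, hΦ, sub_self]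
    have hιΦ : ι ⬝ᵥ Φ = 0 := by rw [← hvalue π₀, policyValue, hexp₀, dotProduct_zero]
    exact ⟨Φ, hιΦ, sub_eq_zero.1 <| eq_zero_of_forall_policyValue_eq_zero hτ hι hγ0 hγ1 hπ₀ hexp₀
      fun π => (hvalue π).trans hιΦ⟩
  · rintro ⟨Φ, hιΦ, rfl⟩ π
    rw [policyValue_potentialShaping hτ hι hγ0.le hγ1, hιΦ, neg_zero]

theorem stmt_8_general {S A : Type} [Fintype S] [DecidableEq S] [Fintype A]
    [Nonempty S]
    (τ : S → A → S → ℝ) (hτ : ∀ s a, IsProbVec (τ s a))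
    (ι : S → ℝ) (hι : IsProbVec ι)
    (γ : ℝ) (hγ0 : 0 < γ) (hγ1 : γ < 1)
    (hreach : AllReachable τ ι)
    (R₁ R₂ : S → A → S → ℝ) :
    (∀ π : Policy S A, Jval τ ι γ R₁ π = Jval τ ι γ R₂ π) ↔
      ∃ Φ : S → ℝ, (∑ s, ι s * Φ s = 0) ∧ ∀ s a,
        ∑ s', τ s a s' * R₂ s a s' =
          (∑ s', τ s a s' * (R₁ s a s' + γ * Φ s')) - Φ s := by
  have hvalue : ∀ π, Jval τ ι γ R₁ π = Jval τ ι γ R₂ π ↔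
      policyValue τ ι γ π (expectedReward τ R₂ - expectedReward τ R₁) = 0 := fun π => by
    rw [policyValue_sub, sub_eq_zero, Jval_eq_policyValue hτ hι hγ0.le hγ1,
      Jval_eq_policyValue hτ hι hγ0.le hγ1, eq_comm]
  have hshaping : ∀ Φ, expectedReward τ R₂ - expectedReward τ R₁ = potentialShaping τ γ Φ ↔
      ∀ s a, ∑ s', τ s a s' * R₂ s a s' = (∑ s', τ s a s' * (R₁ s a s' + γ * Φ s')) - Φ s :=
    fun Φ => by
      simp only [funext_iff, Pi.sub_apply, expectedReward, potentialShaping, mul_add,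
        sum_add_distrib, mul_left_comm _ γ, ← mul_sum]
      exact forall₂_congr fun s a => ⟨fun h => by linarith, fun h => by linarith⟩
  exact (forall_congr' hvalue).trans <|
    (forall_policyValue_eq_zero_iff hτ hι hγ0 hγ1 hreach).trans <|
      exists_congr fun Φ => and_congr Iff.rfl (hshaping Φ)

theorem stmt_8 {S A : Type} [Fintype S] [DecidableEq S] [Fintype A]
    [Nonempty S] [Nonempty A]
    (τ : S → A → S → ℝ) (hτ : ∀ s a, IsProbVec (τ s a))
    (ι : S → ℝ) (hι : IsProbVec ι)
    (γ : ℝ) (hγ0 : 0 < γ) (hγ1 : γ < 1)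
    (hreach : AllReachable τ ι)
    (R₁ R₂ : S → A → S → ℝ) :
    (∀ π : Policy S A, Jval τ ι γ R₁ π = Jval τ ι γ R₂ π) ↔
      ∃ Φ : S → ℝ, (∑ s, ι s * Φ s = 0) ∧ ∀ s a,
        ∑ s', τ s a s' * R₂ s a s' =
          (∑ s', τ s a s' * (R₁ s a s' + γ * Φ s')) - Φ s :=
  stmt_8_general τ hτ ι hι γ hγ0 hγ1 hreach R₁ R₂
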